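/- (Concrete O(1/√N) average-regret rate of PicCoLO, deterministic instance of Theorem 2.) For every real p ≥ 0 there exists a constant C > 0 depending only on p such that the following holds. Let E be a real inner product space, Π ⊆ E a nonempty convex set, N ≥ 1, and set w_n := n^p and w_{1:n} := Σ_{m=1}^n m^p. Let g_1, …, g_N, ĝ_1, …, ĝ_N ∈ E with e_n := g_n − ĝ_n and ‖e_n‖ ≤ G for all n, let D ≥ 0 and M_N ≤ D·w_{1:N}/√N, let R_0, R_1, …, R_N : E → ℝ be differentiable with R_0 convex and, for n ≥ 1, R_n α_n-strongly convex on E with α_n := w_{1:n}/√n. Suppose π̂_1, …, π̂_{N+1} ∈ Π and π_1, …, π_N ∈ Π satisfy for every n and every π ∈ Π: (i) ⟪w_n·ĝ_n + ∇R_{n−1}(π_n) − ∇R_{n−1}(π̂_n), π_n − π⟫ ≤ 0; (ii) ⟪w_n·e_n + ∇R_n(π̂_{n+1}) − ∇R_n(π_n), π̂_{n+1} − π⟫ ≤ 0; and (iii) B_{R_0}(π‖π̂_1) + Σ_{n=1}^N (B_{R_n}(π‖π_n) − B_{R_{n−1}}(π‖π_n)) ≤ M_N. Then for every π ∈ Π: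 (1/w_{1:N})·Σ_{n=1}^N w_n·⟪g_n, π_n − π⟫ ≤ (D + C·G²)/√N. -/

import Mathlib

/-! Each PicCoLO round consists of two mirror steps. The three-point identity turns the
optimality conditions (i) and (ii) into differences of Bregman divergences; those of the form
`B_{R_{n-1}}(π‖π̂_n) - B_{R_n}(π‖π̂_{n+1})` telescope, the regularizer drift is bounded by (iii),
and the remaining cross term `⟪w_n e_n, π_n - π̂_{n+1}⟫` is traded by Young's inequality against
the strong convexity of `R_n`, leaving `‖w_n e_n‖² / (2 α_n)`. For `w_n = n^p` the top half of
`w_{1:n}` gives `n · n^p ≤ 2^(p+1) w_{1:n}`, and with `∑ 1/√n ≤ 2√N` the accumulated error is at most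
`4^(p+1) G² w_{1:N} / √N`. -/

open scoped RealInnerProductSpace

/-- Bregman divergence `B_R(z‖x) = R z − R x − ⟪∇R x, z − x⟫` generated by `R`
with gradient field `gradR`. -/
noncomputable def breg {E : Type*} [NormedAddCommGroup E] [InnerProductSpace ℝ E]
    (R : E → ℝ) (gradR : E → E) (z x : E) : ℝ :=
  R z - R x - ⟪gradR x, z - x⟫

/-- `F` is `α`-strongly convex on the set `K`. -/
def StrongConvexOnSet {E : Type*} [NormedAddCommGroup E] [NormedSpace ℝ E]
    (K : Set E) (α : ℝ) (F : E → ℝ) : Prop :=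
  ∀ ⦃x⦄, x ∈ K → ∀ ⦃y⦄, y ∈ K → ∀ ⦃t : ℝ⦄, 0 ≤ t → t ≤ 1 →
    F (t • x + (1 - t) • y) ≤ t * F x + (1 - t) * F y - α / 2 * t * (1 - t) * ‖x - y‖ ^ 2

open Finset

section Convexity

variable {E : Type*} [NormedAddCommGroup E] [NormedSpace ℝ E]

lemma StrongConvexOnSet.strongConvexOn {K : Set E} {α : ℝ} {F : E → ℝ} (hK : Convex ℝ K)
    (hF : StrongConvexOnSet K α F) : StrongConvexOn K α F := by
  refine ⟨hK, fun x hx y hy a b ha hb hab => ?_⟩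
  obtain rfl : b = 1 - a := by linarith
  have := hF hx hy ha (by linarith)
  simp only [smul_eq_mul]
  linarith

lemma StrongConvexOn.comp_add_smul {m : ℝ} {f : E → ℝ} (hf : StrongConvexOn Set.univ m f) (x v : E) :
    StrongConvexOn Set.univ (m * ‖v‖ ^ 2) fun t : ℝ => f (x + t • v) := by
  refine ⟨convex_univ, fun s _ t _ a b ha hb hab => ?_⟩
  obtain rfl : b = 1 - a := by linarith
  have hpt : x + (a • s + (1 - a) • t) • v = a • (x + s • v) + (1 - a) • (x + t • v) := by
    simp only [smul_eq_mul]; module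
  have hdist : ‖(x + s • v) - (x + t • v)‖ = ‖s - t‖ * ‖v‖ := by
    rw [add_sub_add_left_eq_sub, ← sub_smul, norm_smul]
  have := hf.2 (Set.mem_univ (x + s • v)) (Set.mem_univ (x + t • v)) ha hb (by ring)
  rw [hdist, ← hpt] at this
  simp only [smul_eq_mul] at this ⊢
  linarith

theorem StrongConvexOn.add_le_of_hasFDerivAt {m : ℝ} {f : E → ℝ} {f' : E →L[ℝ] ℝ} {x : E}
    (hf : StrongConvexOn Set.univ m f) (hx : HasFDerivAt f f' x) (y : E) :
    f x + f' (y - x) + m / 2 * ‖y - x‖ ^ 2 ≤ f y := by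
  set v := y - x
  have hφ : ConvexOn ℝ Set.univ fun t : ℝ => f (x + t • v) - m * ‖v‖ ^ 2 / 2 * t ^ 2 := by
    simpa only [Real.norm_eq_abs, sq_abs] using strongConvexOn_iff_convex.1 (hf.comp_add_smul x v)
  have hline : HasDerivAt (fun t : ℝ => x + t • v) v 0 := by
    simpa using ((hasDerivAt_id (0 : ℝ)).smul_const v).const_add x
  have hx' : HasFDerivAt f f' (x + (0 : ℝ) • v) := by simpa using hx
  have hd : HasDerivAt (fun t : ℝ => f (x + t • v) - m * ‖v‖ ^ 2 / 2 * t ^ 2) (f' v) 0 :=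
    ((hx'.comp_hasDerivAt 0 hline).sub
      ((hasDerivAt_pow 2 (0 : ℝ)).const_mul (m * ‖v‖ ^ 2 / 2))).congr_deriv (by simp)
  have := hφ.le_slope_of_hasDerivAt (Set.mem_univ 0) (Set.mem_univ 1) one_pos hd
  simp only [slope_def_field, one_smul, zero_smul, add_zero, sub_zero,
    div_one, v, add_sub_cancel] at this
  linarith

end Convexity

section Bregman

variable {E : Type*} [NormedAddCommGroup E] [InnerProductSpace ℝ E]

lemma le_breg_of_strongConvexOn {α : ℝ} {F : E → ℝ} {gF : E → E} {x : E}
    (hF : StrongConvexOn Set.univ α F) (hx : HasFDerivAt F (innerSL ℝ (gF x)) x) (z : E) :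
    α / 2 * ‖z - x‖ ^ 2 ≤ breg F gF z x := by
  have := hF.add_le_of_hasFDerivAt hx z
  rw [innerSL_apply_apply] at this
  unfold breg
  linarith

lemma breg_nonneg_of_convexOn {F : E → ℝ} {gF : E → E} {x : E}
    (hF : ConvexOn ℝ Set.univ F) (hx : HasFDerivAt F (innerSL ℝ (gF x)) x) (z : E) :
    0 ≤ breg F gF z x := by
  simpa using le_breg_of_strongConvexOn (strongConvexOn_zero.2 hF) hx z

lemma breg_three_point (R : E → ℝ) (gR : E → E) (q x y : E) :
    ⟪gR x - gR y, x - q⟫ = breg R gR q x + breg R gR x y - breg R gR q y := by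
  simp only [breg, inner_sub_left, inner_sub_right]
  ring

lemma inner_le_breg_of_inner_le_zero (R : E → ℝ) {gR : E → E} {v x y q : E}
    (h : ⟪v + gR x - gR y, x - q⟫ ≤ 0) :
    ⟪v, x - q⟫ ≤ breg R gR q y - breg R gR q x - breg R gR x y := by
  rw [add_sub_assoc, inner_add_left, breg_three_point R] at h
  linarith

lemma real_inner_le_half_mul_norm_sq_add {α : ℝ} (hα : 0 < α) (v y : E) :
    ⟪v, y⟫ ≤ α / 2 * ‖y‖ ^ 2 + ‖v‖ ^ 2 / (2 * α) := by
  have hsq : α / 2 * ‖y‖ ^ 2 + ‖v‖ ^ 2 / (2 * α) - ‖v‖ * ‖y‖ = (α * ‖y‖ - ‖v‖) ^ 2 / (2 * α) := by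
    field_simp
    ring
  have : 0 ≤ (α * ‖y‖ - ‖v‖) ^ 2 / (2 * α) := by positivity
  linarith [real_inner_le_norm v y]

theorem inner_le_of_predict_correct {R' R : E → ℝ} {gR' gR : E → E} {α : ℝ} {u v xh x xh' q : E}
    (hR' : ConvexOn ℝ Set.univ R') (hR'd : HasFDerivAt R' (innerSL ℝ (gR' xh)) xh)
    (hR : StrongConvexOn Set.univ α R) (hRd : HasFDerivAt R (innerSL ℝ (gR x)) x) (hα : 0 < α)
    (hpred : ⟪u + gR' x - gR' xh, x - q⟫ ≤ 0) (hcorr : ⟪v + gR xh' - gR x, xh' - q⟫ ≤ 0) :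
    ⟪u + v, x - q⟫ ≤ (breg R' gR' q xh - breg R gR q xh') + (breg R gR q x - breg R' gR' q x)
      + ‖v‖ ^ 2 / (2 * α) := by
  have hu := inner_le_breg_of_inner_le_zero R' hpred
  have hv := inner_le_breg_of_inner_le_zero R hcorr
  have hB' := breg_nonneg_of_convexOn hR' hR'd x
  have hB := le_breg_of_strongConvexOn hR hRd xh'
  have hyoung := real_inner_le_half_mul_norm_sq_add hα v (x - xh')
  have hsplit : ⟪u + v, x - q⟫ = ⟪u, x - q⟫ + ⟪v, x - xh'⟫ + ⟪v, xh' - q⟫ := by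
    simp only [inner_add_left, inner_sub_right]
    ring
  rw [norm_sub_rev] at hyoung
  linarith

end Bregman

section Regret

variable {E : Type*} [NormedAddCommGroup E] [InnerProductSpace ℝ E]

theorem sum_mul_inner_le_of_predict_correct {N : ℕ} {w α : ℕ → ℝ} {g ghat πh π : ℕ → E}
    {R : ℕ → E → ℝ} {gradR : ℕ → E → E} {q : E}
    (hdiff : ∀ n, n ≤ N → ∀ x : E, HasFDerivAt (R n) (innerSL ℝ (gradR n x)) x)
    (hconv : ConvexOn ℝ Set.univ (R 0))
    (hsc : ∀ n, 1 ≤ n → n ≤ N → StrongConvexOn Set.univ (α n) (R n))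
    (hα : ∀ n, 1 ≤ n → n ≤ N → 0 < α n)
    (hpred : ∀ n, 1 ≤ n → n ≤ N →
      ⟪w n • ghat n + gradR (n - 1) (π n) - gradR (n - 1) (πh n), π n - q⟫ ≤ 0)
    (hcorr : ∀ n, 1 ≤ n → n ≤ N →
      ⟪w n • (g n - ghat n) + gradR n (πh (n + 1)) - gradR n (π n), πh (n + 1) - q⟫ ≤ 0) :
    ∑ n ∈ Icc 1 N, w n * ⟪g n, π n - q⟫ ≤
      breg (R 0) (gradR 0) q (πh 1)
        + ∑ n ∈ Icc 1 N,
            (breg (R n) (gradR n) q (π n) - breg (R (n - 1)) (gradR (n - 1)) q (π n))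
        + ∑ n ∈ Icc 1 N, ‖w n • (g n - ghat n)‖ ^ 2 / (2 * α n) := by
  have hconvR : ∀ n, n ≤ N → ConvexOn ℝ Set.univ (R n) := by
    intro n hn
    rcases Nat.eq_zero_or_pos n with rfl | hn1
    · exact hconv
    · exact strongConvexOn_zero.1 ((hsc n hn1 hn).mono (hα n hn1 hn).le)
  set b : ℕ → ℝ := fun n => breg (R (n - 1)) (gradR (n - 1)) q (πh n)
  have hstep : ∀ n ∈ Icc 1 N, w n * ⟪g n, π n - q⟫ ≤ (b n - b (n + 1))
      + (breg (R n) (gradR n) q (π n) - breg (R (n - 1)) (gradR (n - 1)) q (π n))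
      + ‖w n • (g n - ghat n)‖ ^ 2 / (2 * α n) := by
    intro n hn
    obtain ⟨hn1, hnN⟩ := mem_Icc.1 hn
    have := inner_le_of_predict_correct (hconvR (n - 1) (by omega)) (hdiff _ (by omega) _)
      (hsc n hn1 hnN) (hdiff n hnN _) (hα n hn1 hnN) (hpred n hn1 hnN) (hcorr n hn1 hnN)
    rwa [← smul_add, add_sub_cancel, real_inner_smul_left] at this
  have htel : ∑ n ∈ Icc 1 N, (b n - b (n + 1)) = b 1 - b (N + 1) := by
    rw [← Ico_add_one_right_eq_Icc, ← neg_sub, ← sum_Ico_sub (f := b) (by omega),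
      ← sum_neg_distrib]
    simp only [neg_sub]
  have hlast : 0 ≤ b (N + 1) := breg_nonneg_of_convexOn (hconvR N le_rfl) (hdiff N le_rfl _) q
  have := sum_le_sum hstep
  rw [sum_add_distrib, sum_add_distrib, htel] at this
  linarith

end Regret

section Rate

lemma sum_one_div_sqrt_le (N : ℕ) : ∑ n ∈ Icc 1 N, 1 / √n ≤ 2 * √N := by
  induction N with
  | zero => simp
  | succ N ih =>
    rw [sum_Icc_succ_top (by omega)]
    have hpos : 0 < √(N + 1 : ℝ) := Real.sqrt_pos.2 (by positivity)
    have hsq : √(N + 1 : ℝ) ^ 2 = N + 1 := Real.sq_sqrt (by positivity)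
    have hsq' : √(N : ℝ) ^ 2 = N := Real.sq_sqrt (by positivity)
    have hinc : 1 / √(N + 1 : ℝ) ≤ 2 * √(N + 1 : ℝ) - 2 * √N := by
      rw [div_le_iff₀ hpos]
      nlinarith [sq_nonneg (√(N : ℝ) - √(N + 1 : ℝ)), Real.sqrt_nonneg (N : ℝ)]
    push_cast
    linarith

variable {p : ℝ}

lemma natCast_mul_rpow_le_sum_rpow (hp : 0 ≤ p) (n : ℕ) :
    (n : ℝ) * (n : ℝ) ^ p ≤ 2 ^ (p + 1) * ∑ m ∈ Icc 1 n, (m : ℝ) ^ p := by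
  have hsub : Ioc (n / 2) n ⊆ Icc 1 n := fun m hm => by
    simp only [mem_Ioc, mem_Icc] at hm ⊢
    omega
  have hlow : ∀ m ∈ Ioc (n / 2) n, ((n : ℝ) / 2) ^ p ≤ (m : ℝ) ^ p := fun m hm => by
    have : (n : ℝ) ≤ 2 * m := by exact_mod_cast (by have := (mem_Ioc.1 hm).1; omega : n ≤ 2 * m)
    exact Real.rpow_le_rpow (by positivity) (by linarith) hp
  have hcard : (n : ℝ) ≤ 2 * (#(Ioc (n / 2) n) : ℝ) := by
    rw [Nat.card_Ioc]
    exact_mod_cast (by omega : n ≤ 2 * (n - n / 2))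
  calc (n : ℝ) * (n : ℝ) ^ p = 2 ^ (p + 1) * ((n : ℝ) / 2 * ((n : ℝ) / 2) ^ p) := by
        rw [Real.div_rpow (by positivity) zero_le_two, Real.rpow_add_one two_ne_zero]
        field_simp
    _ ≤ 2 ^ (p + 1) * (#(Ioc (n / 2) n) * ((n : ℝ) / 2) ^ p) := by gcongr; linarith
    _ ≤ 2 ^ (p + 1) * ∑ m ∈ Ioc (n / 2) n, (m : ℝ) ^ p := by
        gcongr
        simpa using card_nsmul_le_sum _ _ _ hlow
    _ ≤ 2 ^ (p + 1) * ∑ m ∈ Icc 1 n, (m : ℝ) ^ p := by gcongr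

lemma sum_rpow_pos {n : ℕ} (hn : 1 ≤ n) : 0 < ∑ m ∈ Icc 1 n, (m : ℝ) ^ p :=
  sum_pos (fun m hm => Real.rpow_pos_of_pos (by exact_mod_cast (mem_Icc.1 hm).1) p)
    (nonempty_Icc.2 hn)

lemma rpow_sq_div_le {n N : ℕ} (hp : 0 ≤ p) (hn : 1 ≤ n) (hnN : n ≤ N) :
    ((n : ℝ) ^ p) ^ 2 / (2 * ((∑ m ∈ Icc 1 n, (m : ℝ) ^ p) / √n)) ≤ 2 ^ p * N ^ p * (1 / √n) := by
  have hn0 : (0 : ℝ) < n := by exact_mod_cast hn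
  have hW := sum_rpow_pos (p := p) hn
  have hmono : (n : ℝ) ^ p ≤ (N : ℝ) ^ p := Real.rpow_le_rpow hn0.le (by exact_mod_cast hnN) hp
  rw [div_le_iff₀ (by positivity)]
  field_simp
  rw [Real.sq_sqrt hn0.le]
  calc ((n : ℝ) ^ p) ^ 2 * n = (n : ℝ) ^ p * (n * (n : ℝ) ^ p) := by ring
    _ ≤ (N : ℝ) ^ p * (2 ^ (p + 1) * ∑ m ∈ Icc 1 n, (m : ℝ) ^ p) :=
        mul_le_mul hmono (natCast_mul_rpow_le_sum_rpow hp n) (by positivity) (by positivity)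
    _ = 2 ^ p * N ^ p * 2 * ∑ m ∈ Icc 1 n, (m : ℝ) ^ p := by
        rw [Real.rpow_add_one two_ne_zero]
        ring

lemma sum_rpow_sq_div_le (hp : 0 ≤ p) (N : ℕ) :
    ∑ n ∈ Icc 1 N, ((n : ℝ) ^ p) ^ 2 / (2 * ((∑ m ∈ Icc 1 n, (m : ℝ) ^ p) / √n))
      ≤ 4 ^ (p + 1) * (∑ m ∈ Icc 1 N, (m : ℝ) ^ p) / √N := by
  rcases Nat.eq_zero_or_pos N with rfl | hN
  · simp
  calc _ ≤ ∑ n ∈ Icc 1 N, 2 ^ p * N ^ p * (1 / √n) :=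
        sum_le_sum fun n hn => rpow_sq_div_le hp (mem_Icc.1 hn).1 (mem_Icc.1 hn).2
    _ = 2 ^ p * N ^ p * ∑ n ∈ Icc 1 N, 1 / √n := by rw [mul_sum]
    _ ≤ 2 ^ p * N ^ p * (2 * √N) := by gcongr; exact sum_one_div_sqrt_le N
    _ = 2 ^ (p + 1) * (N * (N : ℝ) ^ p) / √N := by
        rw [Real.rpow_add_one two_ne_zero]
        field_simp
        exact Real.sq_sqrt (Nat.cast_nonneg N)
    _ ≤ 2 ^ (p + 1) * (2 ^ (p + 1) * ∑ m ∈ Icc 1 N, (m : ℝ) ^ p) / √N := by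
        gcongr ?_ * ?_ / _
        exact natCast_mul_rpow_le_sum_rpow hp N
    _ = 4 ^ (p + 1) * (∑ m ∈ Icc 1 N, (m : ℝ) ^ p) / √N := by
        rw [← mul_assoc, ← Real.mul_rpow zero_le_two zero_le_two]
        norm_num

lemma sum_norm_rpow_smul_sq_div_le {E : Type*} [NormedAddCommGroup E] [NormedSpace ℝ E]
    (hp : 0 ≤ p) {N : ℕ} {e : ℕ → E} {G : ℝ} (he : ∀ n, 1 ≤ n → n ≤ N → ‖e n‖ ≤ G) :
    ∑ n ∈ Icc 1 N, ‖(n : ℝ) ^ p • e n‖ ^ 2 / (2 * ((∑ m ∈ Icc 1 n, (m : ℝ) ^ p) / √n))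
      ≤ G ^ 2 * (4 ^ (p + 1) * (∑ m ∈ Icc 1 N, (m : ℝ) ^ p) / √N) := by
  calc _ ≤ ∑ n ∈ Icc 1 N,
        G ^ 2 * (((n : ℝ) ^ p) ^ 2 / (2 * ((∑ m ∈ Icc 1 n, (m : ℝ) ^ p) / √n))) := by
        refine sum_le_sum fun n hn => ?_
        obtain ⟨h1, h2⟩ := mem_Icc.1 hn
        have hen : ‖e n‖ ^ 2 ≤ G ^ 2 := pow_le_pow_left₀ (norm_nonneg _) (he n h1 h2) 2
        rw [norm_smul, mul_pow, Real.norm_eq_abs, sq_abs, mul_div_right_comm, mul_comm]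
        gcongr
    _ ≤ G ^ 2 * (4 ^ (p + 1) * (∑ m ∈ Icc 1 N, (m : ℝ) ^ p) / √N) := by
        rw [← mul_sum]
        gcongr
        exact sum_rpow_sq_div_le hp N

end Rate

/-- Concrete `O(1/√N)` average-regret rate of PicCoLO (deterministic instance
of Theorem 2), for a mirror-descent base algorithm with monomial weights
`w_n = n^p` and adaptive regularization strength `α_n = w_{1:n}/√n`. -/
theorem piccolo_average_regret_rate (p : ℝ) (hp : 0 ≤ p) :
    ∃ C : ℝ, 0 < C ∧
      ∀ (E : Type) [NormedAddCommGroup E] [InnerProductSpace ℝ E]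
        (Pset : Set E), Pset.Nonempty → Convex ℝ Pset →
      ∀ N : ℕ, 1 ≤ N →
      ∀ w : ℕ → ℝ, (∀ n : ℕ, w n = (n : ℝ) ^ p) →
      ∀ (g ghat : ℕ → E) (G : ℝ),
        (∀ n, 1 ≤ n → n ≤ N → ‖g n - ghat n‖ ≤ G) →
      ∀ D MN : ℝ, 0 ≤ D →
        MN ≤ D * (∑ m ∈ Finset.Icc 1 N, w m) / Real.sqrt N →
      ∀ (R : ℕ → E → ℝ) (gradR : ℕ → E → E),
        (∀ n, n ≤ N → ∀ x : E, HasFDerivAt (R n) (innerSL ℝ (gradR n x)) x) →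
        ConvexOn ℝ (Set.univ : Set E) (R 0) →
        (∀ n, 1 ≤ n → n ≤ N →
          StrongConvexOnSet (Set.univ : Set E)
            ((∑ m ∈ Finset.Icc 1 n, w m) / Real.sqrt n) (R n)) →
      ∀ πh π : ℕ → E,
        (∀ n, 1 ≤ n → n ≤ N + 1 → πh n ∈ Pset) →
        (∀ n, 1 ≤ n → n ≤ N → π n ∈ Pset) →
        (∀ n, 1 ≤ n → n ≤ N → ∀ q ∈ Pset,
          ⟪w n • ghat n + gradR (n - 1) (π n) - gradR (n - 1) (πh n), π n - q⟫ ≤ 0) →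
        (∀ n, 1 ≤ n → n ≤ N → ∀ q ∈ Pset,
          ⟪w n • (g n - ghat n) + gradR n (πh (n + 1)) - gradR n (π n),
              πh (n + 1) - q⟫ ≤ 0) →
        (∀ q ∈ Pset,
          breg (R 0) (gradR 0) q (πh 1)
            + ∑ n ∈ Finset.Icc 1 N,
                (breg (R n) (gradR n) q (π n)
                  - breg (R (n - 1)) (gradR (n - 1)) q (π n)) ≤ MN) →
      ∀ q ∈ Pset,
        (1 / ∑ m ∈ Finset.Icc 1 N, w m)
            * ∑ n ∈ Finset.Icc 1 N, w n * ⟪g n, π n - q⟫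
          ≤ (D + C * G ^ 2) / Real.sqrt N := by
  refine ⟨4 ^ (p + 1), by positivity, ?_⟩
  intro E _ _ Pset _ _ N hN w hw g ghat G hG D MN _ hMN R gradR hdiff hconv hsc πh π _ _
    hpred hcorr hM q hq
  obtain rfl : w = fun n : ℕ => (n : ℝ) ^ p := funext hw
  have hregret := sum_mul_inner_le_of_predict_correct
    (α := fun n => (∑ m ∈ Icc 1 n, (m : ℝ) ^ p) / √n) hdiff hconv
    (fun n h1 h2 => (hsc n h1 h2).strongConvexOn convex_univ)
    (fun n h1 _ => div_pos (sum_rpow_pos h1) (Real.sqrt_pos.2 (by exact_mod_cast h1)))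
    (fun n h1 h2 => hpred n h1 h2 q hq) (fun n h1 h2 => hcorr n h1 h2 q hq)
  have herr := sum_norm_rpow_smul_sq_div_le hp hG
  set W := ∑ m ∈ Icc 1 N, (m : ℝ) ^ p
  have hW : 0 < W := sum_rpow_pos hN
  calc (1 / W) * ∑ n ∈ Icc 1 N, (n : ℝ) ^ p * ⟪g n, π n - q⟫
      ≤ (1 / W) * (D * W / √N + G ^ 2 * (4 ^ (p + 1) * W / √N)) := by
        gcongr
        linarith [hM q hq]
    _ = (D + 4 ^ (p + 1) * G ^ 2) / √N := by
        field_simp
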